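/- arXiv:2004.06133 — 3 statements merged into one kernel-verified Lean document; each statement's English description precedes it below -/
import Mathlib

section
/- Let n, m ≥ 1, let A₀, A₁ be Hermitian n×n complex matrices with A₀² = A₁² = Iₙ, let B₀, B₁ be Hermitian m×m complex matrices with B₀² = B₁² = Iₘ, and let ρ be a density matrix on ℂⁿ⊗ℂᵐ (an nm×nm positive semidefinite matrix with trace 1). Then |Tr(ρ · (A₀⊗B₀ + A₀⊗B₁ + A₁⊗B₀ − A₁⊗B₁))| ≤ 2√2 (Tsirelson's bound: the largest CHSH value achievable by local measurements on a shared quantum state is 2√2). -/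
open Matrix Kronecker ComplexOrder

/-!
For commuting self-adjoint involutions `a₀, a₁` and `b₀, b₁` with CHSH operator `C`,
`(√2 a₀ - (b₀ + b₁))² + (√2 a₁ - (b₀ - b₁))² = 8 - 2√2 C`, a sum of squares of self-adjoint
elements and hence positive; replacing `b` by `-b` shows that `8 + 2√2 C` is positive too.
Pairing both with the state `ρ` gives `|Tr(ρ C)| ≤ 8 / (2√2) = 2√2`. The Kronecker factors
`A ⊗ 1` and `1 ⊗ B` of the theorem are such commuting involutions.
-/

def chsh {R : Type*} [Ring R] (a₀ a₁ b₀ b₁ : R) : R :=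
  a₀ * b₀ + a₀ * b₁ + a₁ * b₀ - a₁ * b₁

section CHSH

variable {R : Type*} [Ring R] {a₀ a₁ b₀ b₁ : R}

lemma chsh_neg_right (a₀ a₁ b₀ b₁ : R) : chsh a₀ a₁ (-b₀) (-b₁) = -chsh a₀ a₁ b₀ b₁ := by
  simp only [chsh, mul_neg]
  abel

lemma sq_add_sq_eq_eight_sub_chsh [Algebra ℝ R]
    (ha₀ : a₀ * a₀ = 1) (ha₁ : a₁ * a₁ = 1) (hb₀ : b₀ * b₀ = 1) (hb₁ : b₁ * b₁ = 1)
    (h₀₀ : Commute a₀ b₀) (h₀₁ : Commute a₀ b₁) (h₁₀ : Commute a₁ b₀) (h₁₁ : Commute a₁ b₁) :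
    (√2 • a₀ - (b₀ + b₁)) ^ 2 + (√2 • a₁ - (b₀ - b₁)) ^ 2 =
      8 - (2 * √2) • chsh a₀ a₁ b₀ b₁ := by
  have h2 : √2 * √2 = 2 := Real.mul_self_sqrt zero_le_two
  have h8 : (8 : R) = (8 : ℝ) • 1 := by rw [Algebra.smul_def, mul_one, map_ofNat]
  rw [h8]
  simp only [sq, chsh, sub_mul, mul_sub, add_mul, mul_add, smul_mul_assoc, mul_smul_comm,
    ha₀, ha₁, hb₀, hb₁, h₀₀.eq.symm, h₀₁.eq.symm, h₁₀.eq.symm, h₁₁.eq.symm]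
  match_scalars <;> first | ring1 | linear_combination 2 * h2

variable [StarRing R] [PartialOrder R] [StarOrderedRing R] [Algebra ℝ R] [StarModule ℝ R]

lemma eight_sub_chsh_nonneg
    (ha₀ : IsSelfAdjoint a₀) (ha₁ : IsSelfAdjoint a₁) (hb₀ : IsSelfAdjoint b₀)
    (hb₁ : IsSelfAdjoint b₁)
    (ha₀sq : a₀ * a₀ = 1) (ha₁sq : a₁ * a₁ = 1) (hb₀sq : b₀ * b₀ = 1) (hb₁sq : b₁ * b₁ = 1)
    (h₀₀ : Commute a₀ b₀) (h₀₁ : Commute a₀ b₁) (h₁₀ : Commute a₁ b₀) (h₁₁ : Commute a₁ b₁) :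
    0 ≤ 8 - (2 * √2) • chsh a₀ a₁ b₀ b₁ := by
  rw [← sq_add_sq_eq_eight_sub_chsh ha₀sq ha₁sq hb₀sq hb₁sq h₀₀ h₀₁ h₁₀ h₁₁]
  exact add_nonneg (((IsSelfAdjoint.all _).smul ha₀).sub (hb₀.add hb₁)).sq_nonneg
    (((IsSelfAdjoint.all _).smul ha₁).sub (hb₀.sub hb₁)).sq_nonneg

lemma eight_add_chsh_nonneg
    (ha₀ : IsSelfAdjoint a₀) (ha₁ : IsSelfAdjoint a₁) (hb₀ : IsSelfAdjoint b₀)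
    (hb₁ : IsSelfAdjoint b₁)
    (ha₀sq : a₀ * a₀ = 1) (ha₁sq : a₁ * a₁ = 1) (hb₀sq : b₀ * b₀ = 1) (hb₁sq : b₁ * b₁ = 1)
    (h₀₀ : Commute a₀ b₀) (h₀₁ : Commute a₀ b₁) (h₁₀ : Commute a₁ b₀) (h₁₁ : Commute a₁ b₁) :
    0 ≤ 8 + (2 * √2) • chsh a₀ a₁ b₀ b₁ := by
  simpa only [chsh_neg_right, smul_neg, sub_neg_eq_add] using
    eight_sub_chsh_nonneg ha₀ ha₁ hb₀.neg hb₁.neg ha₀sq ha₁sq (by rwa [neg_mul_neg])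
      (by rwa [neg_mul_neg]) h₀₀.neg_right h₀₁.neg_right h₁₀.neg_right h₁₁.neg_right

end CHSH

namespace Matrix

variable {l m α : Type*}

lemma IsHermitian.kronecker [CommMagma α] [StarMul α] {A : Matrix l l α} {B : Matrix m m α}
    (hA : A.IsHermitian) (hB : B.IsHermitian) : (A ⊗ₖ B).IsHermitian :=
  (conjTranspose_kronecker A B).trans (by rw [hA.eq, hB.eq])

variable [Fintype l] [Fintype m] [DecidableEq l] [DecidableEq m]

section CommSemiring

variable [CommSemiring α]

lemma kronecker_one_mul_self_eq_one {A : Matrix l l α} (hA : A * A = 1) :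
    (A ⊗ₖ (1 : Matrix m m α)) * (A ⊗ₖ 1) = 1 := by
  rw [← mul_kronecker_mul, hA, one_mul, one_kronecker_one]

lemma one_kronecker_mul_self_eq_one {B : Matrix m m α} (hB : B * B = 1) :
    ((1 : Matrix l l α) ⊗ₖ B) * (1 ⊗ₖ B) = 1 := by
  rw [← mul_kronecker_mul, hB, one_mul, one_kronecker_one]

lemma commute_kronecker_one_one_kronecker (A : Matrix l l α) (B : Matrix m m α) :
    Commute (A ⊗ₖ (1 : Matrix m m α)) ((1 : Matrix l l α) ⊗ₖ B) := by
  simp only [Commute, SemiconjBy, ← mul_kronecker_mul, mul_one, one_mul]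

end CommSemiring

open scoped MatrixOrder in
lemma trace_mul_nonneg [RCLike α] {ρ P : Matrix m m α} (hρ : ρ.PosSemidef) (hP : P.PosSemidef) :
    0 ≤ (ρ * P).trace := by
  obtain ⟨S, rfl⟩ := CStarAlgebra.nonneg_iff_eq_star_mul_self.mp hP.nonneg
  rw [star_eq_conjTranspose, ← mul_assoc, trace_mul_comm, ← mul_assoc]
  exact (hρ.mul_mul_conjTranspose_same S).trace_nonneg

end Matrix

namespace Complex

lemma norm_le_of_nonneg_add_of_nonneg_sub {z : ℂ} {r c : ℝ} (hc : 0 < c)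
    (hadd : 0 ≤ (r : ℂ) + c * z) (hsub : 0 ≤ (r : ℂ) - c * z) : ‖z‖ ≤ r / c := by
  rw [nonneg_iff] at hadd hsub
  simp only [add_re, sub_re, add_im, sub_im, re_ofReal_mul, im_ofReal_mul, ofReal_re,
    ofReal_im, zero_add, zero_sub] at hadd hsub
  have him : z.im = 0 := (mul_eq_zero.mp hadd.2.symm).resolve_left hc.ne'
  rw [← abs_re_eq_norm.mpr him, le_div_iff₀ hc, ← abs_of_pos hc, ← abs_mul, abs_le]
  constructor <;> linarith [hadd.1, hsub.1]

end Complex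

open scoped MatrixOrder in
theorem norm_trace_mul_chsh_le {k : Type*} [Fintype k] [DecidableEq k]
    {ρ a₀ a₁ b₀ b₁ : Matrix k k ℂ} (hρ : ρ.PosSemidef) (hρtr : ρ.trace = 1)
    (ha₀ : IsSelfAdjoint a₀) (ha₁ : IsSelfAdjoint a₁) (hb₀ : IsSelfAdjoint b₀)
    (hb₁ : IsSelfAdjoint b₁)
    (ha₀sq : a₀ * a₀ = 1) (ha₁sq : a₁ * a₁ = 1) (hb₀sq : b₀ * b₀ = 1) (hb₁sq : b₁ * b₁ = 1)
    (h₀₀ : Commute a₀ b₀) (h₀₁ : Commute a₀ b₁) (h₁₀ : Commute a₁ b₀) (h₁₁ : Commute a₁ b₁) :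
    ‖(ρ * chsh a₀ a₁ b₀ b₁).trace‖ ≤ 2 * √2 := by
  have hsub := trace_mul_nonneg hρ (eight_sub_chsh_nonneg ha₀ ha₁ hb₀ hb₁
    ha₀sq ha₁sq hb₀sq hb₁sq h₀₀ h₀₁ h₁₀ h₁₁).posSemidef
  have hadd := trace_mul_nonneg hρ (eight_add_chsh_nonneg ha₀ ha₁ hb₀ hb₁
    ha₀sq ha₁sq hb₀sq hb₁sq h₀₀ h₀₁ h₁₀ h₁₁).posSemidef
  have hρ8 : (ρ * 8).trace = 8 := by
    rw [← Nat.cast_ofNat, ← nsmul_eq_mul', trace_smul, hρtr, nsmul_one, Nat.cast_ofNat]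
  simp only [mul_sub, mul_add, trace_sub, trace_add, Matrix.mul_smul,
    trace_smul, Complex.real_smul, hρ8, ← Complex.ofReal_ofNat] at hsub hadd
  calc ‖(ρ * chsh a₀ a₁ b₀ b₁).trace‖ ≤ 8 / (2 * √2) :=
        Complex.norm_le_of_nonneg_add_of_nonneg_sub (by positivity) hadd hsub
    _ = 2 * √2 := by
        rw [div_eq_iff (by positivity)]
        nlinarith [Real.mul_self_sqrt zero_le_two]

theorem stmt_1_general (n m : ℕ)
    (A₀ A₁ : Matrix (Fin n) (Fin n) ℂ) (B₀ B₁ : Matrix (Fin m) (Fin m) ℂ)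
    (hA₀ : A₀.IsHermitian) (hA₁ : A₁.IsHermitian)
    (hB₀ : B₀.IsHermitian) (hB₁ : B₁.IsHermitian)
    (hA₀sq : A₀ * A₀ = 1) (hA₁sq : A₁ * A₁ = 1)
    (hB₀sq : B₀ * B₀ = 1) (hB₁sq : B₁ * B₁ = 1)
    (ρ : Matrix (Fin n × Fin m) (Fin n × Fin m) ℂ)
    (hρ : ρ.PosSemidef) (hρtr : ρ.trace = 1) :
    ‖(ρ * (A₀ ⊗ₖ B₀ + A₀ ⊗ₖ B₁ + A₁ ⊗ₖ B₀ - A₁ ⊗ₖ B₁)).trace‖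
      ≤ 2 * Real.sqrt 2 := by
  have hchsh : A₀ ⊗ₖ B₀ + A₀ ⊗ₖ B₁ + A₁ ⊗ₖ B₀ - A₁ ⊗ₖ B₁ =
      chsh (A₀ ⊗ₖ 1) (A₁ ⊗ₖ 1) (1 ⊗ₖ B₀) (1 ⊗ₖ B₁) := by
    simp only [chsh, ← mul_kronecker_mul, mul_one, one_mul]
  rw [hchsh]
  exact norm_trace_mul_chsh_le hρ hρtr
    (hA₀.kronecker isHermitian_one).isSelfAdjoint (hA₁.kronecker isHermitian_one).isSelfAdjoint
    (isHermitian_one.kronecker hB₀).isSelfAdjoint (isHermitian_one.kronecker hB₁).isSelfAdjoint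
    (kronecker_one_mul_self_eq_one hA₀sq) (kronecker_one_mul_self_eq_one hA₁sq)
    (one_kronecker_mul_self_eq_one hB₀sq) (one_kronecker_mul_self_eq_one hB₁sq)
    (commute_kronecker_one_one_kronecker _ _) (commute_kronecker_one_one_kronecker _ _)
    (commute_kronecker_one_one_kronecker _ _) (commute_kronecker_one_one_kronecker _ _)

/-- Tsirelson's bound: for Hermitian `A₀ A₁` (n×n), `B₀ B₁` (m×m) squaring to
the identity and a density matrix `ρ` on `ℂⁿ⊗ℂᵐ`,
`|Tr(ρ·(A₀⊗B₀ + A₀⊗B₁ + A₁⊗B₀ − A₁⊗B₁))| ≤ 2√2`. -/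
theorem stmt_1 (n m : ℕ) (hn : 1 ≤ n) (hm : 1 ≤ m)
    (A₀ A₁ : Matrix (Fin n) (Fin n) ℂ) (B₀ B₁ : Matrix (Fin m) (Fin m) ℂ)
    (hA₀ : A₀.IsHermitian) (hA₁ : A₁.IsHermitian)
    (hB₀ : B₀.IsHermitian) (hB₁ : B₁.IsHermitian)
    (hA₀sq : A₀ * A₀ = 1) (hA₁sq : A₁ * A₁ = 1)
    (hB₀sq : B₀ * B₀ = 1) (hB₁sq : B₁ * B₁ = 1)
    (ρ : Matrix (Fin n × Fin m) (Fin n × Fin m) ℂ)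
    (hρ : ρ.PosSemidef) (hρtr : ρ.trace = 1) :
    ‖(ρ * (A₀ ⊗ₖ B₀ + A₀ ⊗ₖ B₁ + A₁ ⊗ₖ B₀ - A₁ ⊗ₖ B₁)).trace‖
      ≤ 2 * Real.sqrt 2 :=
  stmt_1_general n m A₀ A₁ B₀ B₁ hA₀ hA₁ hB₀ hB₁ hA₀sq hA₁sq hB₀sq hB₁sq ρ hρ hρtr
end

section
/- The PR box cannot be generated by local measurements on a shared quantum state: there do not exist n, m ≥ 1, a density matrix ρ on ℂⁿ⊗ℂᵐ (an nm×nm positive semidefinite matrix with trace 1), positive semidefinite n×n matrices M_{a|x} (a, x ∈ {0,1}) with M_{0|x} + M_{1|x} = Iₙ for each x, and positive semidefinite m×m matrices N_{b|y} (b, y ∈ {0,1}) with N_{0|y} + N_{1|y} = Iₘ for each y, such that Tr(ρ · (M_{a|x} ⊗ N_{b|y})) = p_PR(ab|xy) for all a, b, x, y ∈ {0,1}. -/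
/-!
Outcomes of probability zero are annihilated: for positive semidefinite `ρ` and `X`,
`Tr(ρ X) = 0` forces `ρ X = 0`. Writing `A a x = M_{a|x} ⊗ 1` and `B b y = 1 ⊗ N_{b|y}`, the
zeros of the PR box give `ρ A a x B b y = 0` whenever `a ⊕ b ≠ x·y`, and these relations alone
force `ρ = 0` in any ring, contradicting `Tr ρ = 1`: the three settings with `x·y = 0` identify
`ρ A₀₁ = ρ B₀₁`, the setting `x = y = 1` gives `ρ = ρ A₀₁ + ρ B₀₁`, and multiplying this by
`B₀₁` on the right yields `ρ B₀₁ = 0`.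
-/

open Matrix Kronecker ComplexOrder

/-- The PR box correlations: `p_PR(ab|xy) = 1/2` if `a ⊕ b = x·y`, else `0`
(arithmetic in `Fin 2`, i.e. mod 2). -/
noncomputable def pPR (a b x y : Fin 2) : ℝ := if a + b = x * y then 1/2 else 0

namespace Matrix

variable {n 𝕜 : Type*} [Fintype n] [DecidableEq n] [RCLike 𝕜]

open scoped MatrixOrder in
theorem PosSemidef.mul_eq_zero_of_trace_mul_eq_zero {A B : Matrix n n 𝕜}
    (hA : A.PosSemidef) (hB : B.PosSemidef) (h : (A * B).trace = 0) : A * B = 0 := by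
  obtain ⟨P, rfl⟩ := CStarAlgebra.nonneg_iff_eq_star_mul_self.mp hA.nonneg
  obtain ⟨Q, rfl⟩ := CStarAlgebra.nonneg_iff_eq_star_mul_self.mp hB.nonneg
  simp only [star_eq_conjTranspose] at h ⊢
  have hPQ : P * Qᴴ = 0 := by
    rw [← trace_conjTranspose_mul_self_eq_zero_iff, conjTranspose_mul, conjTranspose_conjTranspose,
      mul_assoc, trace_mul_comm, ← h, mul_assoc, mul_assoc, mul_assoc]
  calc Pᴴ * P * (Qᴴ * Q) = Pᴴ * (P * Qᴴ) * Q := by noncomm_ring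
    _ = 0 := by rw [hPQ, mul_zero, zero_mul]

end Matrix

section Ring

variable {R : Type*} [Ring R]

theorem mul_eq_mul_of_mul_mul_eq_zero {ρ p p' q q' : R} (hp : p + p' = 1) (hq : q + q' = 1)
    (h₁ : ρ * p * q' = 0) (h₂ : ρ * p' * q = 0) : ρ * p = ρ * q :=
  calc ρ * p = ρ * p * (q + q') := by rw [hq, mul_one]
    _ = ρ * (p + p') * q := by rw [mul_add, h₁, mul_add, add_mul, h₂, add_zero]
    _ = ρ * q := by rw [hp, mul_one]

theorem eq_zero_of_forall_mul_mul_eq_zero_of_add_ne_mul {ρ : R} {A B : Fin 2 → Fin 2 → R}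
    (hA : ∀ x, A 0 x + A 1 x = 1) (hB : ∀ y, B 0 y + B 1 y = 1)
    (hzero : ∀ a b x y, a + b ≠ x * y → ρ * A a x * B b y = 0) : ρ = 0 := by
  have hcompat : ∀ x y : Fin 2, x * y = 0 → ρ * A 0 x = ρ * B 0 y := fun x y hxy =>
    mul_eq_mul_of_mul_mul_eq_zero (hA x) (hB y) (hzero 0 1 x y (by simp [hxy]))
      (hzero 1 0 x y (by simp [hxy]))
  have hAB : ρ * A 0 1 = ρ * B 0 1 := by
    rw [hcompat 1 0 rfl, ← hcompat 0 0 rfl, hcompat 0 1 rfl]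
  have h00 := hzero 0 0 1 1 (by decide)
  have hsplit : ρ = ρ * A 0 1 + ρ * B 0 1 := by
    have h11 := hzero 1 1 1 1 (by decide)
    rw [eq_sub_of_add_eq' (hA 1), eq_sub_of_add_eq' (hB 1)] at h11
    calc ρ = ρ * (1 - A 0 1) * (1 - B 0 1) - ρ * A 0 1 * B 0 1 + ρ * A 0 1 + ρ * B 0 1 := by
          noncomm_ring
      _ = ρ * A 0 1 + ρ * B 0 1 := by rw [h11, h00, sub_zero, zero_add]
  have hB01 : ρ * B 0 1 = 0 := by
    calc ρ * B 0 1 = (ρ * A 0 1 + ρ * B 0 1) * B 0 1 := by rw [← hsplit]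
      _ = ρ * A 0 1 * B 0 1 + ρ * A 0 1 * B 0 1 := by rw [add_mul, ← hAB]
      _ = 0 := by rw [h00, add_zero]
  rw [hsplit, hAB, hB01, add_zero]

end Ring

/-- the PR box cannot be generated by local POVM measurements on a shared
quantum state. -/
theorem stmt_2 :
    ¬ ∃ (n m : ℕ), 1 ≤ n ∧ 1 ≤ m ∧
      ∃ (ρ : Matrix (Fin n × Fin m) (Fin n × Fin m) ℂ)
        (M : Fin 2 → Fin 2 → Matrix (Fin n) (Fin n) ℂ)
        (N : Fin 2 → Fin 2 → Matrix (Fin m) (Fin m) ℂ),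
        ρ.PosSemidef ∧ ρ.trace = 1 ∧
        (∀ a x, (M a x).PosSemidef) ∧ (∀ x, M 0 x + M 1 x = 1) ∧
        (∀ b y, (N b y).PosSemidef) ∧ (∀ y, N 0 y + N 1 y = 1) ∧
        (∀ a b x y, (ρ * (M a x ⊗ₖ N b y)).trace = (pPR a b x y : ℂ)) := by
  rintro ⟨n, m, -, -, ρ, M, N, hρ, hρtr, hM, hMsum, hN, hNsum, hp⟩
  have hzero : ∀ a b x y, a + b ≠ x * y →
      ρ * (M a x ⊗ₖ (1 : Matrix (Fin m) (Fin m) ℂ)) * ((1 : Matrix (Fin n) (Fin n) ℂ) ⊗ₖ N b y)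
        = 0 := by
    intro a b x y hab
    rw [mul_assoc, ← mul_kronecker_mul, mul_one, one_mul]
    exact hρ.mul_eq_zero_of_trace_mul_eq_zero ((hM a x).kronecker (hN b y)) (by simp [hp, pPR, hab])
  have hρ0 : ρ = 0 := eq_zero_of_forall_mul_mul_eq_zero_of_add_ne_mul
    (fun x => by rw [← add_kronecker, hMsum, one_kronecker_one])
    (fun y => by rw [← kronecker_add, hNsum, one_kronecker_one]) hzero
  simp [hρ0] at hρtr
end

section
/- Eigenstate criterion for LOSE-free channels: let E : M_{d_A·d_B}(ℂ) → M_{d_A·d_B}(ℂ) be localizable, i.e., there exist p, q ≥ 1, a density matrix σ on ℂᵖ ⊗ ℂ^q, and finite Kraus families K_i (matrices of size d_A × d_A·p, with Σ_i K_i† K_i = I_{d_A·p}) and L_j (matrices of size d_B × d_B·q, with Σ_j L_j† L_j = I_{d_B·q}) such that E(ρ) = Σ_{i,j} (K_i ⊗ L_j) P (ρ ⊗ σ) P† (K_i ⊗ L_j)† for all ρ, where P is the permutation matrix reordering the tensor factors ℂ^{d_A} ⊗ ℂ^{d_B} ⊗ ℂᵖ ⊗ ℂ^q into (ℂ^{d_A}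 ⊗ ℂᵖ) ⊗ (ℂ^{d_B} ⊗ ℂ^q). Let ψ ∈ ℂ^{d_A} ⊗ ℂ^{d_B} be a unit vector with E(ψψ†) = ψψ†, let A be an invertible d_A×d_A matrix and B an invertible d_B×d_B matrix, and suppose that the normalized vectors ψ_A = (A ⊗ I)ψ/‖(A ⊗ I)ψ‖ and ψ_B = (I ⊗ B)ψ/‖(I ⊗ B)ψ‖ also satisfy E(ψ_A ψ_A†) = ψ_A ψ_A† and E(ψ_B ψ_B†) = ψ_B ψ_B†. Then the normalized vector ψ_{AB} = (A ⊗ B)ψ/‖(A ⊗ B)ψ‖ satisfies E(ψ_{AB} ψ_{AB}†) = ψ_{AB} ψ_{AB}†. -/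
open Matrix Kronecker ComplexOrder

/-- Normalization of a vector: `v / ‖v‖`, where `‖v‖ = √(⟨v,v⟩)` for the standard inner
product on `ℂ^ι`. -/
noncomputable def normVec {ι : Type*} [Fintype ι] (v : ι → ℂ) : ι → ℂ :=
  (((Real.sqrt (star v ⬝ᵥ v).re : ℝ) : ℂ))⁻¹ • v

/-!
Write the shared state as `σ = ∑ₑ sₑ sₑ†`. Then `E (v w†) = D v (D w)†` after realignment, where
the Stinespring dilation `D v` is read as a matrix from Alice's side (output, Kraus index `i`,
purification index `e`) to Bob's side (output, Kraus index `j`). A unit vector `φ` is fixed by `E`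
exactly when `D φ = Φ ⊗ G` for some `G`, with `Φ` the `dA × dB` matrix of `φ`.

Local operators lift through the dilation: as `∑ K_i† K_i = 1`, the block matrix
`X = [δ_{ee'} K_i (A ⊗ 1) K_{i'}†]` satisfies `X D v = D ((A ⊗ 1) v)`, and likewise
`D v Y = D ((1 ⊗ B) v)` on Bob's side. With `D ψ = Ψ ⊗ G`, this gives
`D ((A ⊗ B) ψ) = X (Ψ ⊗ G) Y`, while `X (Ψ ⊗ G) = AΨ ⊗ G_A` and `(Ψ ⊗ G) Y = ΨBᵀ ⊗ G_B` because
`ψ_A` and `ψ_B` are fixed. Inserting generalized inverses, `Ψ ⊗ G = (Ψ ⊗ G) (N ⊗ H) (Ψ ⊗ G)`,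
yields `X (Ψ ⊗ G) Y = AΨBᵀ ⊗ G_A H G_B`.
-/

namespace Matrix

variable {R l m n p : Type*}

theorem sum_kronecker [CommSemiring R] {ι : Type*} (s : Finset ι) (f : ι → Matrix l m R)
    (B : Matrix n p R) : (∑ i ∈ s, f i) ⊗ₖ B = ∑ i ∈ s, f i ⊗ₖ B := by
  ext x y
  simp [Matrix.sum_apply, Finset.sum_mul]

theorem kronecker_sum [CommSemiring R] {ι : Type*} (s : Finset ι) (A : Matrix l m R)
    (g : ι → Matrix n p R) : A ⊗ₖ (∑ i ∈ s, g i) = ∑ i ∈ s, A ⊗ₖ g i := by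
  ext x y
  simp [Matrix.sum_apply, Finset.mul_sum]

theorem trace_reindex [AddCommMonoid R] [Fintype m] [Fintype n] (e : m ≃ n) (M : Matrix m m R) :
    trace (reindex e e M) = trace M :=
  e.symm.sum_comp fun i => M i i

theorem of_curry_kronecker_mulVec [CommSemiring R] [Fintype m] [Fintype n]
    (A : Matrix l m R) (B : Matrix p n R) (v : m × n → R) :
    of (Function.curry ((A ⊗ₖ B) *ᵥ v)) = A * of (Function.curry v) * Bᵀ := by
  ext a b
  simp only [of_apply, Function.curry_apply, mulVec, dotProduct, mul_apply, Fintype.sum_prod_type,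
    kroneckerMap_apply, transpose_apply, Finset.sum_mul]
  rw [Finset.sum_comm]
  exact Fintype.sum_congr _ _ fun b => Fintype.sum_congr _ _ fun a => mul_right_comm _ _ _

def realign (M : Matrix (l × m) (n × p) R) : Matrix (l × n) (m × p) R :=
  of fun k t => M (k.1, t.1) (k.2, t.2)

theorem realign_injective : Function.Injective (realign : Matrix (l × m) (n × p) R → _) :=
  fun _ _ h => ext fun i j => congr_fun₂ h (i.1, j.1) (i.2, j.2)

theorem eq_vecMulVec_of_mul_conjTranspose_eq [Ring R] [StarRing R] [PartialOrder R]
    [StarOrderedRing R] [NoZeroDivisors R] [Fintype m] [Fintype n] [DecidableEq m]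
    {C : Matrix m n R} {φ : m → R} (hφ : star φ ⬝ᵥ φ = 1)
    (hC : C * Cᴴ = vecMulVec φ (star φ)) : C = vecMulVec φ (star φ ᵥ* C) := by
  set P := vecMulVec φ (star φ)
  have hP : (1 - P) * P = 0 := by
    rw [Matrix.sub_mul, Matrix.one_mul, vecMulVec_mul_vecMulVec, hφ, one_smul, sub_self]
  have : ((1 - P) * C) * ((1 - P) * C)ᴴ = 0 := by
    rw [conjTranspose_mul, Matrix.mul_assoc, ← Matrix.mul_assoc C, hC, ← Matrix.mul_assoc, hP,
      Matrix.zero_mul]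
  rwa [self_mul_conjTranspose_eq_zero, Matrix.sub_mul, Matrix.one_mul, vecMulVec_mul,
    sub_eq_zero] at this

theorem exists_mul_mul_eq_self [Field R] [Fintype m] [Fintype n] [DecidableEq m] [DecidableEq n]
    (M : Matrix m n R) : ∃ N : Matrix n m R, M * N * M = M := by
  set f := toLin' M
  obtain ⟨l, hl⟩ := f.range.subtype.exists_leftInverse_of_injective f.range.ker_subtype
  obtain ⟨r, hr⟩ := f.rangeRestrict.exists_rightInverse_of_surjective f.range_rangeRestrict
  refine ⟨LinearMap.toMatrix' (r ∘ₗ l), toLin'.injective (LinearMap.ext fun x => ?_)⟩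
  have hr' := congr($hr (l (f x)))
  have hl' := congr($hl (f.rangeRestrict x))
  simp only [LinearMap.comp_apply, LinearMap.id_apply] at hr' hl'
  simp only [toLin'_mul, toLin'_toMatrix', LinearMap.comp_apply]
  change ((f.rangeRestrict (r (l (f x))) : m → R)) = (f.rangeRestrict x : m → R)
  rw [hr', ← hl']
  rfl

theorem exists_mul_kronecker_mul_eq [Field R] [Fintype l] [Fintype m] [Fintype n]
    [Fintype p] [DecidableEq l] [DecidableEq m] [DecidableEq n] [DecidableEq p] {A : Matrix l l R}
    {B : Matrix m m R} {Ψ : Matrix l m R} {G G₁ G₂ : Matrix n p R}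
    {X : Matrix (l × n) (l × n) R} {Y : Matrix (m × p) (m × p) R}
    (hX : X * (Ψ ⊗ₖ G) = (A * Ψ) ⊗ₖ G₁) (hY : (Ψ ⊗ₖ G) * Y = (Ψ * B) ⊗ₖ G₂) :
    ∃ G', X * (Ψ ⊗ₖ G) * Y = (A * Ψ * B) ⊗ₖ G' := by
  obtain ⟨N, hN⟩ := exists_mul_mul_eq_self Ψ
  obtain ⟨H, hH⟩ := exists_mul_mul_eq_self G
  refine ⟨G₁ * H * G₂, ?_⟩
  calc X * (Ψ ⊗ₖ G) * Y = X * ((Ψ ⊗ₖ G) * (N ⊗ₖ H) * (Ψ ⊗ₖ G)) * Y := by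
        rw [← mul_kronecker_mul, ← mul_kronecker_mul, hN, hH]
    _ = (X * (Ψ ⊗ₖ G)) * (N ⊗ₖ H) * ((Ψ ⊗ₖ G) * Y) := by simp only [Matrix.mul_assoc]
    _ = (A * (Ψ * N * Ψ) * B) ⊗ₖ (G₁ * H * G₂) := by
        rw [hX, hY, ← mul_kronecker_mul, ← mul_kronecker_mul]
        simp only [Matrix.mul_assoc]
    _ = (A * Ψ * B) ⊗ₖ (G₁ * H * G₂) := by rw [hN]

end Matrix

theorem star_normVec_dotProduct_normVec {ι : Type*} [Fintype ι] {u : ι → ℂ} (hu : u ≠ 0) :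
    star (normVec u) ⬝ᵥ normVec u = 1 := by
  have hpos : 0 < star u ⬝ᵥ u := dotProduct_star_self_pos_iff.2 hu
  have hre : star u ⬝ᵥ u = ((star u ⬝ᵥ u).re : ℂ) := Complex.eq_re_of_ofReal_le hpos.le
  have hr : 0 < (star u ⬝ᵥ u).re := by
    rw [hre] at hpos
    exact_mod_cast hpos
  rw [normVec, star_smul, smul_dotProduct, dotProduct_smul, hre]
  simp only [smul_eq_mul, star_inv₀, Complex.star_def, Complex.conj_ofReal, Complex.ofReal_re]
  rw [← mul_assoc, ← mul_inv, ← Complex.ofReal_mul, Real.mul_self_sqrt hr.le]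
  exact inv_mul_cancel₀ (by exact_mod_cast hr.ne')

section LocalChannel

variable {α β π κ ι μ ε : Type*}

def purifiedInput (s : ε → π × κ → ℂ) (v : α × β → ℂ) : Matrix ((α × π) × (β × κ)) ε ℂ :=
  of fun ((a, x), (b, y)) e => v (a, b) * s e (x, y)

theorem purifiedInput_smul (s : ε → π × κ → ℂ) (c : ℂ) (v : α × β → ℂ) :
    purifiedInput s (c • v) = c • purifiedInput s v := by
  ext ⟨⟨a, x⟩, ⟨b, y⟩⟩ e
  simp [purifiedInput, mul_assoc]

theorem purifiedInput_mul_conjTranspose [Fintype ε] (s : ε → π × κ → ℂ) (v w : α × β → ℂ) :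
    purifiedInput s v * (purifiedInput s w)ᴴ =
      reindex (Equiv.prodProdProdComm α β π κ) (Equiv.prodProdProdComm α β π κ)
        (vecMulVec v (star w) ⊗ₖ ∑ e, vecMulVec (s e) (star (s e))) := by
  ext ⟨⟨a, x⟩, ⟨b, y⟩⟩ ⟨⟨a', x'⟩, ⟨b', y'⟩⟩
  simp only [purifiedInput, mul_apply, conjTranspose_apply, of_apply, reindex_apply,
    submatrix_apply, Equiv.prodProdProdComm_symm, Equiv.prodProdProdComm_apply, kroneckerMap_apply,
    Matrix.sum_apply, vecMulVec_apply, Finset.mul_sum]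
  exact Fintype.sum_congr _ _ fun e => by simp only [Pi.star_apply, star_mul']; ring

variable [Fintype α] [Fintype β] [Fintype π] [Fintype κ]

theorem kronecker_mul_purifiedInput [DecidableEq π] [DecidableEq κ] (s : ε → π × κ → ℂ)
    (A : Matrix α α ℂ) (B : Matrix β β ℂ) (v : α × β → ℂ) :
    ((A ⊗ₖ (1 : Matrix π π ℂ)) ⊗ₖ (B ⊗ₖ (1 : Matrix κ κ ℂ))) * purifiedInput s v =
      purifiedInput s ((A ⊗ₖ B) *ᵥ v) := by
  ext ⟨⟨a, x⟩, ⟨b, y⟩⟩ e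
  simp [purifiedInput, mul_apply, mulVec, dotProduct, Fintype.sum_prod_type, one_apply,
    Finset.sum_mul, mul_assoc]

variable (K : ι → Matrix α (α × π) ℂ) (L : μ → Matrix β (β × κ) ℂ) (s : ε → π × κ → ℂ)

def dilation (v : α × β → ℂ) : Matrix (α × ι × ε) (β × μ) ℂ :=
  of fun (a, i, e) (b, j) => ((K i ⊗ₖ L j) * purifiedInput s v) (a, b) e

theorem dilation_smul (c : ℂ) (v : α × β → ℂ) : dilation K L s (c • v) = c • dilation K L s v := by
  ext ⟨a, i, e⟩ ⟨b, j⟩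
  simp [dilation, purifiedInput_smul]

def loseChannel [Fintype ι] [Fintype μ] (σ : Matrix (π × κ) (π × κ) ℂ)
    (ρ : Matrix (α × β) (α × β) ℂ) : Matrix (α × β) (α × β) ℂ :=
  ∑ i, ∑ j, (K i ⊗ₖ L j) *
    reindex (Equiv.prodProdProdComm α β π κ) (Equiv.prodProdProdComm α β π κ) (ρ ⊗ₖ σ) *
    (K i ⊗ₖ L j)ᴴ

theorem loseChannel_vecMulVec [Fintype ι] [Fintype μ] [Fintype ε] (v w : α × β → ℂ) :
    loseChannel K L (∑ e, vecMulVec (s e) (star (s e))) (vecMulVec v (star w)) =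
      (dilation K L s v).realign * ((dilation K L s w).realign)ᴴ := by
  have hfactor (i j) : (K i ⊗ₖ L j) * (purifiedInput s v * (purifiedInput s w)ᴴ) * (K i ⊗ₖ L j)ᴴ =
      ((K i ⊗ₖ L j) * purifiedInput s v) * ((K i ⊗ₖ L j) * purifiedInput s w)ᴴ := by
    simp only [conjTranspose_mul, Matrix.mul_assoc]
  simp only [loseChannel, ← purifiedInput_mul_conjTranspose, hfactor]
  ext ⟨a, b⟩ ⟨a', b'⟩
  simp only [Matrix.sum_apply]
  rw [Matrix.mul_apply, Fintype.sum_prod_type, Fintype.sum_prod_type]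
  refine Fintype.sum_congr _ _ fun i => ?_
  rw [Finset.sum_comm]
  refine Fintype.sum_congr _ _ fun j => ?_
  rw [Matrix.mul_apply]
  rfl

variable {K L s} [DecidableEq α] [DecidableEq β] [DecidableEq π] [DecidableEq κ]

theorem trace_loseChannel [Fintype ι] [Fintype μ] (hK : ∑ i, (K i)ᴴ * K i = 1)
    (hL : ∑ j, (L j)ᴴ * L j = 1) (σ : Matrix (π × κ) (π × κ) ℂ) (ρ : Matrix (α × β) (α × β) ℂ) :
    trace (loseChannel K L σ ρ) = trace ρ * trace σ := by
  unfold loseChannel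
  set R := reindex (Equiv.prodProdProdComm α β π κ) (Equiv.prodProdProdComm α β π κ) (ρ ⊗ₖ σ)
  have cycle (i j) : trace ((K i ⊗ₖ L j) * R * (K i ⊗ₖ L j)ᴴ) =
      trace ((((K i)ᴴ * K i) ⊗ₖ ((L j)ᴴ * L j)) * R) := by
    rw [trace_mul_cycle, conjTranspose_kronecker, mul_kronecker_mul]
  calc trace (∑ i, ∑ j, (K i ⊗ₖ L j) * R * (K i ⊗ₖ L j)ᴴ)
      = trace ((∑ i, ∑ j, ((K i)ᴴ * K i) ⊗ₖ ((L j)ᴴ * L j)) * R) := by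
        simp only [trace_sum, cycle, Matrix.sum_mul]
    _ = trace ρ * trace σ := by
        simp only [← kronecker_sum, ← sum_kronecker, hK, hL, one_kronecker_one, Matrix.one_mul]
        exact (trace_reindex _ _).trans (trace_kronecker _ _)

theorem exists_mul_dilation_eq [Fintype ι] [Fintype ε] [DecidableEq ε]
    (hK : ∑ i, (K i)ᴴ * K i = 1) (A : Matrix α α ℂ) :
    ∃ X : Matrix (α × ι × ε) (α × ι × ε) ℂ,
      ∀ v, X * dilation K L s v = dilation K L s ((A ⊗ₖ (1 : Matrix β β ℂ)) *ᵥ v) := by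
  set M : ι → ι → Matrix α α ℂ := fun i i' => K i * (A ⊗ₖ (1 : Matrix π π ℂ)) * (K i')ᴴ
  have hblocks (v i j) :
      ∑ i', (M i i' ⊗ₖ (1 : Matrix β β ℂ)) * ((K i' ⊗ₖ L j) * purifiedInput s v) =
      (K i ⊗ₖ L j) * purifiedInput s ((A ⊗ₖ (1 : Matrix β β ℂ)) *ᵥ v) :=
    calc _ = ((∑ i', M i i' * K i') ⊗ₖ L j) * purifiedInput s v := by
          simp only [← Matrix.mul_assoc, ← mul_kronecker_mul, Matrix.one_mul, sum_kronecker,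
            Matrix.sum_mul]
      _ = ((K i * (A ⊗ₖ (1 : Matrix π π ℂ))) ⊗ₖ L j) * purifiedInput s v := by
          simp only [M, Matrix.mul_assoc, ← Matrix.mul_sum, hK, Matrix.mul_one]
      _ = _ := by
          rw [← kronecker_mul_purifiedInput, one_kronecker_one, ← Matrix.mul_assoc,
            ← mul_kronecker_mul, Matrix.mul_one]
  refine ⟨of fun aie aie' => if aie.2.2 = aie'.2.2 then M aie.2.1 aie'.2.1 aie.1 aie'.1 else 0,
    fun v => ?_⟩
  ext ⟨a, i, e⟩ ⟨b, j⟩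
  calc _ = (∑ i', (M i i' ⊗ₖ (1 : Matrix β β ℂ)) * ((K i' ⊗ₖ L j) * purifiedInput s v))
        (a, b) e := by
        simp only [Matrix.sum_apply]
        rw [Matrix.mul_apply, Fintype.sum_prod_type]
        simp only [Matrix.mul_apply (N := (K _ ⊗ₖ L j) * purifiedInput s v), Fintype.sum_prod_type,
          of_apply, dilation, kroneckerMap_apply, one_apply, mul_ite, ite_mul, mul_one, mul_zero,
          zero_mul, Finset.sum_ite_eq, Finset.mem_univ, if_true]
        exact Finset.sum_comm
    _ = _ := congr_fun₂ (hblocks v i j) (a, b) e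

theorem exists_dilation_mul_eq [Fintype μ] (hL : ∑ j, (L j)ᴴ * L j = 1) (B : Matrix β β ℂ) :
    ∃ Y : Matrix (β × μ) (β × μ) ℂ,
      ∀ v, dilation K L s v * Y = dilation K L s (((1 : Matrix α α ℂ) ⊗ₖ B) *ᵥ v) := by
  set M : μ → μ → Matrix β β ℂ := fun j j' => L j * (B ⊗ₖ (1 : Matrix κ κ ℂ)) * (L j')ᴴ
  have hblocks (v i j) :
      ∑ j', ((1 : Matrix α α ℂ) ⊗ₖ M j j') * ((K i ⊗ₖ L j') * purifiedInput s v) =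
      (K i ⊗ₖ L j) * purifiedInput s (((1 : Matrix α α ℂ) ⊗ₖ B) *ᵥ v) :=
    calc _ = (K i ⊗ₖ ∑ j', M j j' * L j') * purifiedInput s v := by
          simp only [← Matrix.mul_assoc, ← mul_kronecker_mul, Matrix.one_mul, kronecker_sum,
            Matrix.sum_mul]
      _ = (K i ⊗ₖ (L j * (B ⊗ₖ (1 : Matrix κ κ ℂ)))) * purifiedInput s v := by
          simp only [M, Matrix.mul_assoc, ← Matrix.mul_sum, hL, Matrix.mul_one]
      _ = _ := by
          rw [← kronecker_mul_purifiedInput, one_kronecker_one, ← Matrix.mul_assoc,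
            ← mul_kronecker_mul, Matrix.mul_one]
  refine ⟨of fun bj' bj => M bj.2 bj'.2 bj.1 bj'.1, fun v => ?_⟩
  ext ⟨a, i, e⟩ ⟨b, j⟩
  calc _ = (∑ j', ((1 : Matrix α α ℂ) ⊗ₖ M j j') * ((K i ⊗ₖ L j') * purifiedInput s v))
        (a, b) e := by
        simp only [Matrix.sum_apply]
        rw [Matrix.mul_apply, Fintype.sum_prod_type]
        simp only [Matrix.mul_apply (N := (K i ⊗ₖ L _) * purifiedInput s v), Fintype.sum_prod_type,
          of_apply, dilation, kroneckerMap_apply, one_apply, ite_mul, one_mul, zero_mul,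
          Finset.sum_ite_irrel, Finset.sum_const_zero, Finset.sum_ite_eq, Finset.mem_univ, if_true]
        rw [Finset.sum_comm]
        exact Fintype.sum_congr _ _ fun j' => Fintype.sum_congr _ _ fun b' => mul_comm _ _
    _ = _ := congr_fun₂ (hblocks v i j) (a, b) e

variable [Fintype ι] [Fintype μ] [Fintype ε]

theorem loseChannel_fixed_iff (hK : ∑ i, (K i)ᴴ * K i = 1) (hL : ∑ j, (L j)ᴴ * L j = 1)
    (hs : trace (∑ e, vecMulVec (s e) (star (s e))) = 1) {φ : α × β → ℂ}
    (hφ : star φ ⬝ᵥ φ = 1) :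
    loseChannel K L (∑ e, vecMulVec (s e) (star (s e))) (vecMulVec φ (star φ)) =
        vecMulVec φ (star φ) ↔
      ∃ G, dilation K L s φ = of (Function.curry φ) ⊗ₖ G := by
  have hE := loseChannel_vecMulVec K L s φ φ
  rw [hE]
  constructor
  · intro h
    refine ⟨of (Function.curry (star φ ᵥ* (dilation K L s φ).realign)), realign_injective ?_⟩
    exact eq_vecMulVec_of_mul_conjTranspose_eq hφ h
  · rintro ⟨G, hG⟩
    set g : (ι × ε) × μ → ℂ := fun t => G t.1 t.2
    have hC : (dilation K L s φ).realign = vecMulVec φ g := by rw [hG]; rfl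
    rw [hC, conjTranspose_vecMulVec, vecMulVec_mul_vecMulVec] at hE ⊢
    have hg : g ⬝ᵥ star g = 1 := by
      have := trace_loseChannel hK hL (∑ e, vecMulVec (s e) (star (s e))) (vecMulVec φ (star φ))
      rwa [hE, hs, trace_vecMulVec, trace_vecMulVec, dotProduct_smul, dotProduct_comm φ, hφ,
        smul_eq_mul, mul_one, mul_one] at this
    rw [hg, one_smul]

theorem loseChannel_normVec_fixed_iff (hK : ∑ i, (K i)ᴴ * K i = 1) (hL : ∑ j, (L j)ᴴ * L j = 1)
    (hs : trace (∑ e, vecMulVec (s e) (star (s e))) = 1) (u : α × β → ℂ) :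
    loseChannel K L (∑ e, vecMulVec (s e) (star (s e)))
        (vecMulVec (normVec u) (star (normVec u))) = vecMulVec (normVec u) (star (normVec u)) ↔
      ∃ G, dilation K L s u = of (Function.curry u) ⊗ₖ G := by
  rcases eq_or_ne u 0 with rfl | hu
  · refine iff_of_true ?_ ⟨0, ?_⟩
    · simp [normVec, loseChannel]
    · simpa using dilation_smul K L s 0 0
  have hunit := star_normVec_dotProduct_normVec hu
  rw [loseChannel_fixed_iff hK hL hs hunit]
  set c : ℂ := ((Real.sqrt (star u ⬝ᵥ u).re : ℝ) : ℂ)⁻¹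
  have hc : c ≠ 0 := fun hc => by
    simp [normVec, show ((Real.sqrt (star u ⬝ᵥ u).re : ℝ) : ℂ)⁻¹ = 0 from hc] at hunit
  refine exists_congr fun G => ?_
  rw [normVec, dilation_smul, show of (Function.curry (c • u)) = c • of (Function.curry u) from rfl,
    smul_kronecker, smul_right_inj hc]

end LocalChannel

theorem stmt_14_general (dA dB : ℕ)
    (E : Matrix (Fin dA × Fin dB) (Fin dA × Fin dB) ℂ →
         Matrix (Fin dA × Fin dB) (Fin dA × Fin dB) ℂ)
    (hloc : ∃ (p q : ℕ), 1 ≤ p ∧ 1 ≤ q ∧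
      ∃ σ : Matrix (Fin p × Fin q) (Fin p × Fin q) ℂ, σ.PosSemidef ∧ σ.trace = 1 ∧
        ∃ (NK NL : ℕ) (K : Fin NK → Matrix (Fin dA) (Fin dA × Fin p) ℂ)
          (L : Fin NL → Matrix (Fin dB) (Fin dB × Fin q) ℂ),
          (∑ i, (K i)ᴴ * K i = 1) ∧ (∑ j, (L j)ᴴ * L j = 1) ∧
          ∀ ρ, E ρ = ∑ i, ∑ j,
            (K i ⊗ₖ L j) *
              (Matrix.reindex (Equiv.prodProdProdComm (Fin dA) (Fin dB) (Fin p) (Fin q))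
                (Equiv.prodProdProdComm (Fin dA) (Fin dB) (Fin p) (Fin q)) (ρ ⊗ₖ σ)) *
              (K i ⊗ₖ L j)ᴴ)
    (ψ : Fin dA × Fin dB → ℂ) (hψ : star ψ ⬝ᵥ ψ = 1)
    (hfix : E (Matrix.vecMulVec ψ (star ψ)) = Matrix.vecMulVec ψ (star ψ))
    (A : Matrix (Fin dA) (Fin dA) ℂ)
    (B : Matrix (Fin dB) (Fin dB) ℂ)
    (hfixA :
      E (Matrix.vecMulVec (normVec ((A ⊗ₖ (1 : Matrix (Fin dB) (Fin dB) ℂ)) *ᵥ ψ))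
          (star (normVec ((A ⊗ₖ (1 : Matrix (Fin dB) (Fin dB) ℂ)) *ᵥ ψ)))) =
        Matrix.vecMulVec (normVec ((A ⊗ₖ (1 : Matrix (Fin dB) (Fin dB) ℂ)) *ᵥ ψ))
          (star (normVec ((A ⊗ₖ (1 : Matrix (Fin dB) (Fin dB) ℂ)) *ᵥ ψ))))
    (hfixB :
      E (Matrix.vecMulVec (normVec (((1 : Matrix (Fin dA) (Fin dA) ℂ) ⊗ₖ B) *ᵥ ψ))
          (star (normVec (((1 : Matrix (Fin dA) (Fin dA) ℂ) ⊗ₖ B) *ᵥ ψ)))) =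
        Matrix.vecMulVec (normVec (((1 : Matrix (Fin dA) (Fin dA) ℂ) ⊗ₖ B) *ᵥ ψ))
          (star (normVec (((1 : Matrix (Fin dA) (Fin dA) ℂ) ⊗ₖ B) *ᵥ ψ)))) :
    E (Matrix.vecMulVec (normVec ((A ⊗ₖ B) *ᵥ ψ)) (star (normVec ((A ⊗ₖ B) *ᵥ ψ)))) =
      Matrix.vecMulVec (normVec ((A ⊗ₖ B) *ᵥ ψ)) (star (normVec ((A ⊗ₖ B) *ᵥ ψ))) := by
  obtain ⟨p, q, -, -, σ, hσ, hσtr, NK, NL, K, L, hK, hL, hE⟩ := hloc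
  obtain ⟨m, s, rfl⟩ := posSemidef_iff_eq_sum_vecMulVec.1 hσ
  obtain rfl : E = loseChannel K L _ := funext hE
  obtain ⟨G, hG⟩ := (loseChannel_fixed_iff hK hL hσtr hψ).1 hfix
  obtain ⟨GA, hGA⟩ := (loseChannel_normVec_fixed_iff hK hL hσtr _).1 hfixA
  obtain ⟨GB, hGB⟩ := (loseChannel_normVec_fixed_iff hK hL hσtr _).1 hfixB
  obtain ⟨X, hX⟩ := exists_mul_dilation_eq (L := L) (s := s) hK A
  obtain ⟨Y, hY⟩ := exists_dilation_mul_eq (K := K) (s := s) hL B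
  have hXG : X * (of (Function.curry ψ) ⊗ₖ G) = (A * of (Function.curry ψ)) ⊗ₖ GA := by
    rw [← hG, hX, hGA, of_curry_kronecker_mulVec, transpose_one, Matrix.mul_one]
  have hGY : (of (Function.curry ψ) ⊗ₖ G) * Y = (of (Function.curry ψ) * Bᵀ) ⊗ₖ GB := by
    rw [← hG, hY, hGB, of_curry_kronecker_mulVec, Matrix.one_mul]
  have hXGY : dilation K L s ((A ⊗ₖ B) *ᵥ ψ) = X * (of (Function.curry ψ) ⊗ₖ G) * Y := by
    rw [← hG, hX, hY, mulVec_mulVec, ← mul_kronecker_mul, Matrix.one_mul, Matrix.mul_one]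
  rw [loseChannel_normVec_fixed_iff hK hL hσtr, hXGY, of_curry_kronecker_mulVec]
  exact exists_mul_kronecker_mul_eq hXG hGY

/-- eigenstate criterion for LOSE-free channels: let `E` be a localizable
channel on `M_{dA·dB}(ℂ)`, i.e. `E(ρ) = Σ_{i,j} (K_i ⊗ L_j) P (ρ ⊗ σ) P† (K_i ⊗ L_j)†`
for a shared density matrix `σ` on `ℂᵖ ⊗ ℂ^q`, local Kraus families `K_i` (size
`dA × dA·p`, `Σ K_i†K_i = 1`) and `L_j` (size `dB × dB·q`, `Σ L_j†L_j = 1`), and `P` the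
permutation reordering `(ℂ^{dA} ⊗ ℂ^{dB}) ⊗ (ℂᵖ ⊗ ℂ^q)` into
`(ℂ^{dA} ⊗ ℂᵖ) ⊗ (ℂ^{dB} ⊗ ℂ^q)`. If a unit vector `ψ` and its normalized images under
`A ⊗ I` and `I ⊗ B` (with `A`, `B` invertible) are all eigenstates of `E` (fixed pure
states), then so is the normalized image of `ψ` under `A ⊗ B`. -/
theorem stmt_14 (dA dB : ℕ)
    (E : Matrix (Fin dA × Fin dB) (Fin dA × Fin dB) ℂ →
         Matrix (Fin dA × Fin dB) (Fin dA × Fin dB) ℂ)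
    (hloc : ∃ (p q : ℕ), 1 ≤ p ∧ 1 ≤ q ∧
      ∃ σ : Matrix (Fin p × Fin q) (Fin p × Fin q) ℂ, σ.PosSemidef ∧ σ.trace = 1 ∧
        ∃ (NK NL : ℕ) (K : Fin NK → Matrix (Fin dA) (Fin dA × Fin p) ℂ)
          (L : Fin NL → Matrix (Fin dB) (Fin dB × Fin q) ℂ),
          (∑ i, (K i)ᴴ * K i = 1) ∧ (∑ j, (L j)ᴴ * L j = 1) ∧
          ∀ ρ, E ρ = ∑ i, ∑ j,
            (K i ⊗ₖ L j) *
              (Matrix.reindex (Equiv.prodProdProdComm (Fin dA) (Fin dB) (Fin p) (Fin q))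
                (Equiv.prodProdProdComm (Fin dA) (Fin dB) (Fin p) (Fin q)) (ρ ⊗ₖ σ)) *
              (K i ⊗ₖ L j)ᴴ)
    (ψ : Fin dA × Fin dB → ℂ) (hψ : star ψ ⬝ᵥ ψ = 1)
    (hfix : E (Matrix.vecMulVec ψ (star ψ)) = Matrix.vecMulVec ψ (star ψ))
    (A : Matrix (Fin dA) (Fin dA) ℂ) (hA : IsUnit A)
    (B : Matrix (Fin dB) (Fin dB) ℂ) (hB : IsUnit B)
    (hfixA :
      E (Matrix.vecMulVec (normVec ((A ⊗ₖ (1 : Matrix (Fin dB) (Fin dB) ℂ)) *ᵥ ψ))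
          (star (normVec ((A ⊗ₖ (1 : Matrix (Fin dB) (Fin dB) ℂ)) *ᵥ ψ)))) =
        Matrix.vecMulVec (normVec ((A ⊗ₖ (1 : Matrix (Fin dB) (Fin dB) ℂ)) *ᵥ ψ))
          (star (normVec ((A ⊗ₖ (1 : Matrix (Fin dB) (Fin dB) ℂ)) *ᵥ ψ))))
    (hfixB :
      E (Matrix.vecMulVec (normVec (((1 : Matrix (Fin dA) (Fin dA) ℂ) ⊗ₖ B) *ᵥ ψ))
          (star (normVec (((1 : Matrix (Fin dA) (Fin dA) ℂ) ⊗ₖ B) *ᵥ ψ)))) =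
        Matrix.vecMulVec (normVec (((1 : Matrix (Fin dA) (Fin dA) ℂ) ⊗ₖ B) *ᵥ ψ))
          (star (normVec (((1 : Matrix (Fin dA) (Fin dA) ℂ) ⊗ₖ B) *ᵥ ψ)))) :
    E (Matrix.vecMulVec (normVec ((A ⊗ₖ B) *ᵥ ψ)) (star (normVec ((A ⊗ₖ B) *ᵥ ψ)))) =
      Matrix.vecMulVec (normVec ((A ⊗ₖ B) *ᵥ ψ)) (star (normVec ((A ⊗ₖ B) *ᵥ ψ))) :=
  stmt_14_general dA dB E hloc ψ hψ hfix A B hfixA hfixB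
end
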